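/- arXiv:2004.01739 — 2 statements merged into one kernel-verified Lean document; each statement's English description precedes it below -/
import Mathlib

section
/- Let the cost vectors a_1, a_2, … be i.i.d. random vectors in ℝ^d with mean a = E[a_1] ≠ 0, satisfying ‖a_n‖ ≤ L and ‖a_n − a‖ ≤ R almost surely. Let x_1, x_2, … be the actions of the lazy anytime Subgradient algorithm on the closed Euclidean unit ball with base point y_1 = 0 and parameter η > 0, let x* = −a/‖a‖, and set M = ⌈4/(η²‖a‖²) + 8R²/‖a‖²⌉. Then Σ_{i=1}^M E[a·(x_i − x*)] ≤ 2L + (1/(2η) + 2η·L² + √(2π)·R)·(1 + 2/(η‖a‖) + 2√2·R/‖a‖). -/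
open Finset MeasureTheory ProbabilityTheory
open scoped RealInnerProductSpace

/-- `IsProjOn X p q` says that `q` is the Euclidean nearest-point projection of `p`
onto the set `X`. -/
def IsProjOn {d : ℕ} (X : Set (EuclideanSpace ℝ (Fin d)))
    (p q : EuclideanSpace ℝ (Fin d)) : Prop :=
  q ∈ X ∧ ∀ z ∈ X, ‖p - q‖ ≤ ‖p - z‖

/-!
The action `x_i` depends on `a_1, …, a_{i-1}` only, so it is independent of `a_i` and
`E⟪a, x_i - x*⟫ = E⟪a_i, x_i - x*⟫`. Pathwise, the lazy projection `x_{n+1}` minimises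
`z ↦ √n/(2η) ‖z‖² + ⟪a_1 + ⋯ + a_n, z⟫` over the ball, and the usual be-the-leader analysis of
this follow-the-regularised-leader scheme bounds the realised regret against any point of the
ball by `(1/(2η) + 2ηL²) √M`. Finally `√⌈α² + β²⌉ ≤ 1 + α + β` with `α = 2/(η‖a‖)`,
`β = 2√2 R/‖a‖`.
-/

section ProjBall

variable {E : Type*} [NormedAddCommGroup E] [InnerProductSpace ℝ E]

noncomputable def projBall (p : E) : E := (max 1 ‖p‖)⁻¹ • p

@[simp]
lemma projBall_zero : projBall (0 : E) = 0 := by simp [projBall]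

lemma continuous_projBall : Continuous (projBall : E → E) :=
  ((continuous_const.max continuous_norm).inv₀ fun p => by positivity).smul continuous_id

lemma norm_projBall_le (p : E) : ‖projBall p‖ ≤ 1 := by
  rw [projBall, norm_smul, norm_inv, Real.norm_of_nonneg (by positivity),
    inv_mul_le_iff₀ (by positivity), mul_one]
  exact le_max_right _ _

lemma inner_sub_projBall_nonpos (p : E) {z : E} (hz : ‖z‖ ≤ 1) :
    ⟪p - projBall p, z - projBall p⟫ ≤ 0 := by
  rcases le_total ‖p‖ 1 with hp | hp
  · simp [projBall, max_eq_left hp]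
  · have hpz : ⟪p, z⟫ ≤ ‖p‖ := (real_inner_le_norm p z).trans (by nlinarith)
    have : p - projBall p = (1 - ‖p‖⁻¹) • p := by simp [projBall, max_eq_right hp, sub_smul]
    rw [this, real_inner_smul_left, projBall, max_eq_right hp, inner_sub_right,
      real_inner_smul_right, real_inner_self_eq_norm_sq, inv_mul_eq_div, sq, mul_self_div_self]
    exact mul_nonpos_of_nonneg_of_nonpos (sub_nonneg.2 (inv_le_one_of_one_le₀ hp))
      (sub_nonpos.2 hpz)

lemma eq_of_inner_sub_nonpos {p q q' : E} (hq : ⟪p - q, q' - q⟫ ≤ 0)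
    (hq' : ⟪p - q', q - q'⟫ ≤ 0) : q = q' := by
  have : ‖q' - q‖ ^ 2 = ⟪p - q, q' - q⟫ + ⟪p - q', q - q'⟫ := by
    rw [← real_inner_self_eq_norm_sq]
    simp only [inner_sub_left, inner_sub_right]
    ring
  have : ‖q' - q‖ = 0 := by nlinarith [norm_nonneg (q' - q)]
  exact (sub_eq_zero.1 (norm_eq_zero.1 this)).symm

end ProjBall

section IsProjOn

variable {d : ℕ} {X : Set (EuclideanSpace ℝ (Fin d))} {p q : EuclideanSpace ℝ (Fin d)}

lemma IsProjOn.inner_sub_nonpos (h : IsProjOn X p q) (hX : Convex ℝ X) {z} (hz : z ∈ X) :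
    ⟪p - q, z - q⟫ ≤ 0 := by
  have : Nonempty X := ⟨⟨q, h.1⟩⟩
  have hbdd : BddBelow (Set.range fun w : X => ‖p - w‖) := by
    refine ⟨0, ?_⟩
    rintro _ ⟨w, rfl⟩
    exact norm_nonneg _
  have hinf : ‖p - q‖ = ⨅ w : X, ‖p - w‖ :=
    le_antisymm (le_ciInf fun w => h.2 w w.2) (ciInf_le hbdd ⟨q, h.1⟩)
  exact (norm_eq_iInf_iff_real_inner_le_zero hX h.1).1 hinf z hz

lemma IsProjOn.eq_projBall (h : IsProjOn (Metric.closedBall 0 1) p q) : q = projBall p :=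
  eq_of_inner_sub_nonpos (h.inner_sub_nonpos (convex_closedBall 0 1)
      (mem_closedBall_zero_iff.2 (norm_projBall_le p)))
    (inner_sub_projBall_nonpos p (mem_closedBall_zero_iff.1 h.1))

end IsProjOn

lemma one_div_two_mul_sqrt_le_sqrt_sub_sqrt {x : ℝ} (hx : 1 ≤ x) :
    1 / (2 * √x) ≤ √x - √(x - 1) := by
  have hs : 0 < √x := Real.sqrt_pos.2 (by linarith)
  have hprod : √(x - 1) * √x ≤ x - 1 / 2 := by
    rw [← Real.sqrt_mul (by linarith), Real.sqrt_le_left (by linarith)]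
    nlinarith
  rw [div_le_iff₀ (by positivity)]
  nlinarith [Real.sq_sqrt (show 0 ≤ x by linarith)]

section LazySubgradient

variable {E : Type*} [NormedAddCommGroup E] [InnerProductSpace ℝ E]

lemma abs_real_inner_le_young {ε : ℝ} (hε : 0 < ε) (v w : E) :
    |⟪v, w⟫| ≤ ε / 2 * ‖v‖ ^ 2 + ε⁻¹ / 2 * ‖w‖ ^ 2 := by
  have key : ‖v‖ * ‖w‖ ≤ ε / 2 * ‖v‖ ^ 2 + ε⁻¹ / 2 * ‖w‖ ^ 2 := by
    have h : 0 ≤ ε⁻¹ / 2 * (ε * ‖v‖ - ‖w‖) ^ 2 := by positivity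
    have e : ε⁻¹ / 2 * (ε * ‖v‖ - ‖w‖) ^ 2
        = ε / 2 * ‖v‖ ^ 2 + ε⁻¹ / 2 * ‖w‖ ^ 2 - ‖v‖ * ‖w‖ := by
      field_simp
      ring
    linarith
  exact (abs_real_inner_le_norm v w).trans key

/-- `hq` is the variational inequality of the projection of `-c⁻¹ • S`, which makes `q` the
minimiser of `w ↦ c/2 ‖w‖² + ⟪S, w⟫`; the conclusion is the quadratic growth around it. -/
lemma objective_le_of_inner_sub_nonpos {c : ℝ} (hc : 0 < c) {S q z : E}
    (hq : ⟪-(c⁻¹ • S) - q, z - q⟫ ≤ 0) :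
    c / 2 * ‖q‖ ^ 2 + ⟪S, q⟫ + c / 2 * ‖z - q‖ ^ 2 ≤ c / 2 * ‖z‖ ^ 2 + ⟪S, z⟫ := by
  have hz : ‖z‖ ^ 2 = ‖q‖ ^ 2 + 2 * ⟪q, z - q⟫ + ‖z - q‖ ^ 2 := by
    rw [← norm_add_sq_real, add_sub_cancel]
  have hvi : 0 ≤ ⟪S, z - q⟫ + c * ⟪q, z - q⟫ := by
    have : ⟪-(c⁻¹ • S) - q, z - q⟫ = -c⁻¹ * (⟪S, z - q⟫ + c * ⟪q, z - q⟫) := by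
      simp only [inner_sub_left, inner_neg_left, real_inner_smul_left]
      field_simp
      ring
    rw [this] at hq
    nlinarith [inv_pos.2 hc]
  rw [inner_sub_right] at hvi
  nlinarith

/-- The action `x_n` of lazy anytime Subgradient on the unit ball with base point `y`; at
`n = 1` the sum is empty and this is `P(y)`. -/
noncomputable def lazyBallIterate (y : E) (η : ℝ) (b : ℕ → E) (n : ℕ) : E :=
  projBall (y - (η / √((n - 1 : ℕ) : ℝ)) • ∑ i ∈ Icc 1 (n - 1), b i)

variable {η L : ℝ} {b : ℕ → E}

lemma lazyBallIterate_succ (y : E) (n : ℕ) :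
    lazyBallIterate y η b (n + 1) = projBall (y - (η / √n) • ∑ i ∈ Icc 1 n, b i) := by
  simp [lazyBallIterate]

lemma lazyBallIterate_one : lazyBallIterate (0 : E) η b 1 = 0 := by
  simp [lazyBallIterate]

lemma lazyBallIterate_objective_le (hη : 0 < η) {n : ℕ} (hn : 1 ≤ n) {z : E} (hz : ‖z‖ ≤ 1) :
    √n / (2 * η) * ‖lazyBallIterate 0 η b (n + 1)‖ ^ 2
        + ⟪∑ i ∈ Icc 1 n, b i, lazyBallIterate 0 η b (n + 1)⟫
        + √n / (2 * η) * ‖z - lazyBallIterate 0 η b (n + 1)‖ ^ 2 ≤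
      √n / (2 * η) * ‖z‖ ^ 2 + ⟪∑ i ∈ Icc 1 n, b i, z⟫ := by
  have hc : 0 < √n / η := div_pos (Real.sqrt_pos.2 (by exact_mod_cast hn)) hη
  have h := objective_le_of_inner_sub_nonpos hc (S := ∑ i ∈ Icc 1 n, b i)
    (q := lazyBallIterate 0 η b (n + 1)) (z := z)
    (by rw [inv_div, lazyBallIterate_succ, ← zero_sub]; exact inner_sub_projBall_nonpos _ hz)
  rwa [show √n / η / 2 = √n / (2 * η) by ring] at h

lemma sum_inner_lazyBallIterate_le (hη : 0 < η) {n : ℕ} (hn : 1 ≤ n)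
    (hb : ∀ i ∈ Icc 1 n, ‖b i‖ ≤ L) :
    ∑ t ∈ Icc 1 n, ⟪b t, lazyBallIterate 0 η b t⟫ ≤
      √n / (2 * η) * ‖lazyBallIterate 0 η b (n + 1)‖ ^ 2
        + ⟪∑ i ∈ Icc 1 n, b i, lazyBallIterate 0 η b (n + 1)⟫
        + η * L ^ 2 / 2 * (1 + 2 * √(n - 1)) := by
  set x := lazyBallIterate 0 η b
  -- Each step costs `η ‖b (n + 1)‖² / (2√n)` (Young, against the strong convexity of the
  -- objective), which the increment `η L² (√n - √(n - 1))` of the last term absorbs.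
  induction n, hn using Nat.le_induction with
  | base =>
    have hb1 : ‖b 1‖ ^ 2 ≤ L ^ 2 := by
      have := hb 1 (by simp)
      gcongr
    have young := abs_real_inner_le_young hη (b 1) (x (1 + 1))
    rw [abs_le, inv_eq_one_div, div_div] at young
    have hx1 : x 1 = 0 := lazyBallIterate_one
    simp only [Icc_self, sum_singleton, hx1, inner_zero_right, Nat.cast_one, Real.sqrt_one,
      sub_self, Real.sqrt_zero]
    rw [mul_comm η 2] at young
    nlinarith [young.1, mul_le_mul_of_nonneg_left hb1 hη.le]
  | succ n hn ih =>
    have hbn : ‖b (n + 1)‖ ^ 2 ≤ L ^ 2 := by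
      have := hb (n + 1) (by simp)
      gcongr
    have ih := ih fun i hi => hb i (Icc_subset_Icc_right n.le_succ hi)
    have hs : 0 < √n := Real.sqrt_pos.2 (by exact_mod_cast hn)
    have hobj := lazyBallIterate_objective_le (b := b) hη hn (z := x (n + 2)) (norm_projBall_le _)
    have young := abs_real_inner_le_young (div_pos hη hs) (b (n + 1)) (x (n + 1) - x (n + 2))
    rw [abs_le, inv_div, inner_sub_right, norm_sub_rev] at young
    have hgap : η / √n / 2 * ‖b (n + 1)‖ ^ 2 ≤ η * L ^ 2 * (√n - √(n - 1)) := by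
      calc η / √n / 2 * ‖b (n + 1)‖ ^ 2 ≤ η * L ^ 2 * (1 / (2 * √n)) := by
            rw [show η / √n / 2 = η * (1 / (2 * √n)) by ring]
            nlinarith [mul_le_mul_of_nonneg_left hbn (by positivity : 0 ≤ η * (1 / (2 * √n)))]
        _ ≤ η * L ^ 2 * (√n - √(n - 1)) := by
            gcongr
            exact one_div_two_mul_sqrt_le_sqrt_sub_sqrt (by exact_mod_cast hn)
    have hmono : √n / (2 * η) * ‖x (n + 2)‖ ^ 2 ≤ √(n + 1 : ℕ) / (2 * η) * ‖x (n + 2)‖ ^ 2 := by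
      gcongr
      simp
    rw [sum_Icc_succ_top (by omega), sum_Icc_succ_top (by omega), inner_add_left]
    push_cast at hmono ⊢
    simp only [add_sub_cancel_right]
    have : √n / η / 2 = √n / (2 * η) := by ring
    nlinarith [young.1]

theorem lazyBallIterate_regret_le (hη : 0 < η) {M : ℕ} (hb : ∀ i ∈ Icc 1 M, ‖b i‖ ≤ L) {u : E}
    (hu : ‖u‖ ≤ 1) :
    ∑ i ∈ Icc 1 M, ⟪b i, lazyBallIterate 0 η b i - u⟫ ≤ (1 / (2 * η) + 2 * η * L ^ 2) * √M := by
  rcases Nat.eq_zero_or_pos M with rfl | hM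
  · simp
  have hsum := sum_inner_lazyBallIterate_le hη hM hb
  have hobj := lazyBallIterate_objective_le (b := b) hη hM hu
  have hsM : 1 ≤ √M := Real.one_le_sqrt.2 (by exact_mod_cast hM)
  have hsM' : √(M - 1) ≤ √M := Real.sqrt_le_sqrt (by linarith)
  have hu2 : √M / (2 * η) * ‖u‖ ^ 2 ≤ √M / (2 * η) := by
    refine mul_le_of_le_one_right (by positivity) ?_
    nlinarith [norm_nonneg u]
  have hL : η * L ^ 2 / 2 * (1 + 2 * √(M - 1)) ≤ 2 * η * L ^ 2 * √M := by
    rw [show 2 * η * L ^ 2 * √M = η * L ^ 2 / 2 * (4 * √M) by ring]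
    gcongr
    linarith
  simp only [inner_sub_right, sum_sub_distrib, ← sum_inner]
  have : 0 ≤ √M / (2 * η) * ‖u - lazyBallIterate 0 η b (M + 1)‖ ^ 2 := by positivity
  have : (1 / (2 * η) + 2 * η * L ^ 2) * √M = √M / (2 * η) + 2 * η * L ^ 2 * √M := by ring
  linarith

end LazySubgradient

section Independence

variable {Ω E : Type*} [MeasurableSpace Ω] {μ : Measure Ω}
  [NormedAddCommGroup E] [InnerProductSpace ℝ E] [FiniteDimensional ℝ E]
  [MeasurableSpace E] [BorelSpace E]

lemma ProbabilityTheory.IndepFun.integrable_inner {X Y : Ω → E} (hXY : X ⟂ᵢ[μ] Y)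
    (hX : Integrable X μ) (hY : Integrable Y μ) : Integrable (fun ω => ⟪X ω, Y ω⟫) μ := by
  set e := stdOrthonormalBasis ℝ E
  rw [funext fun ω => (e.sum_inner_mul_inner (X ω) (Y ω)).symm]
  refine integrable_finsetSum _ fun k _ => ?_
  exact (hXY.comp (continuous_id.inner continuous_const).measurable
    (continuous_const.inner continuous_id).measurable).integrable_mul
    (hX.inner_const _) (hY.const_inner _)

lemma ProbabilityTheory.IndepFun.integral_inner_eq_inner_integral {X Y : Ω → E}
    (hXY : X ⟂ᵢ[μ] Y) (hX : Integrable X μ) (hY : Integrable Y μ) :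
    ∫ ω, ⟪X ω, Y ω⟫ ∂μ = ⟪∫ ω, X ω ∂μ, ∫ ω, Y ω ∂μ⟫ := by
  set e := stdOrthonormalBasis ℝ E
  have hcoord : ∀ k, (fun ω => ⟪X ω, e k⟫) ⟂ᵢ[μ] (fun ω => ⟪e k, Y ω⟫) := fun k =>
    hXY.comp (continuous_id.inner continuous_const).measurable
      (continuous_const.inner continuous_id).measurable
  have hint : ∀ k, Integrable (fun ω => ⟪X ω, e k⟫ * ⟪e k, Y ω⟫) μ := fun k =>
    (hcoord k).integrable_mul (hX.inner_const _) (hY.const_inner _)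
  rw [funext fun ω => (e.sum_inner_mul_inner (X ω) (Y ω)).symm,
    ← e.sum_inner_mul_inner (∫ ω, X ω ∂μ), integral_finsetSum _ fun k _ => hint k]
  refine sum_congr rfl fun k _ => ?_
  rw [(hcoord k).integral_fun_mul_eq_mul_integral (hX.inner_const _).1 (hY.const_inner _).1,
    integral_inner hY]
  simp only [real_inner_comm (e k), integral_inner hX]

variable {A : ℕ → Ω → E}

lemma measurable_lazyBallIterate (hA : ∀ i, Measurable (A i)) (y : E) (η : ℝ) (n : ℕ) :
    Measurable fun ω => lazyBallIterate y η (A · ω) n :=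
  continuous_projBall.measurable.comp
    (measurable_const.sub ((Finset.measurable_sum _ fun i _ => hA i).const_smul _))

lemma indepFun_lazyBallIterate (hA : ∀ i, Measurable (A i)) (hind : iIndepFun A μ) (y : E)
    (η : ℝ) (n : ℕ) : (fun ω => lazyBallIterate y η (A · ω) n) ⟂ᵢ[μ] A n := by
  have hsum := hind.indepFun_finsetSum_of_notMem hA (s := Icc 1 (n - 1)) (i := n)
    (by simp only [mem_Icc]; omega)
  have hg : Measurable fun v : E => projBall (y - (η / √((n - 1 : ℕ) : ℝ)) • v) :=
    (continuous_projBall.comp (continuous_const.sub (continuous_const.smul continuous_id))).measurable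
  refine (hsum.comp hg measurable_id).congr (.of_forall fun ω => ?_) .rfl
  simp [lazyBallIterate]

theorem sum_integral_inner_lazyBallIterate_le [IsProbabilityMeasure μ]
    (hA : ∀ i, Measurable (A i)) (hind : iIndepFun A μ) {a : E}
    (hmean : ∀ i, ∫ ω, A i ω ∂μ = a) {L : ℝ} (hL : ∀ i, ∀ᵐ ω ∂μ, ‖A i ω‖ ≤ L) {η : ℝ}
    (hη : 0 < η) {u : E} (hu : ‖u‖ ≤ 1) (M : ℕ) :
    ∑ i ∈ Icc 1 M, ∫ ω, ⟪a, lazyBallIterate 0 η (A · ω) i - u⟫ ∂μ ≤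
      (1 / (2 * η) + 2 * η * L ^ 2) * √M := by
  set y := fun i ω => lazyBallIterate 0 η (A · ω) i - u
  have hAint : ∀ i, Integrable (A i) μ := fun i =>
    .of_bound (hA i).aestronglyMeasurable L (hL i)
  have hyint : ∀ i, Integrable (y i) μ := fun i =>
    (Integrable.of_bound (measurable_lazyBallIterate hA 0 η i).aestronglyMeasurable 1
      (.of_forall fun _ => norm_projBall_le _)).sub (integrable_const u)
  have hindy : ∀ i, A i ⟂ᵢ[μ] y i := fun i =>
    ((indepFun_lazyBallIterate hA hind 0 η i).comp (measurable_id.sub_const u)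
      measurable_id).symm
  calc ∑ i ∈ Icc 1 M, ∫ ω, ⟪a, y i ω⟫ ∂μ
      = ∑ i ∈ Icc 1 M, ∫ ω, ⟪A i ω, y i ω⟫ ∂μ := sum_congr rfl fun i _ => by
        rw [(hindy i).integral_inner_eq_inner_integral (hAint i) (hyint i), hmean,
          integral_inner (hyint i)]
    _ = ∫ ω, ∑ i ∈ Icc 1 M, ⟪A i ω, y i ω⟫ ∂μ :=
        (integral_finsetSum _ fun i _ => (hindy i).integrable_inner (hAint i) (hyint i)).symm
    _ ≤ ∫ ω, (1 / (2 * η) + 2 * η * L ^ 2) * √M ∂μ := by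
        refine integral_mono_ae (integrable_finsetSum _ fun i _ =>
          (hindy i).integrable_inner (hAint i) (hyint i)) (integrable_const _) ?_
        filter_upwards [ae_all_iff.2 hL] with ω hω
        exact lazyBallIterate_regret_le hη (fun i _ => hω i) hu
    _ = (1 / (2 * η) + 2 * η * L ^ 2) * √M := by simp

end Independence

lemma sqrt_natCeil_add_sq_le {α β : ℝ} (hα : 0 ≤ α) (hβ : 0 ≤ β) :
    √⌈α ^ 2 + β ^ 2⌉₊ ≤ 1 + α + β := by
  rw [Real.sqrt_le_left (by positivity)]
  nlinarith [Nat.ceil_lt_add_one (show 0 ≤ α ^ 2 + β ^ 2 by positivity)]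

theorem ball_initial_segment_general {d : ℕ}
    {Ω : Type*} [MeasurableSpace Ω] (μ : Measure Ω) [IsProbabilityMeasure μ]
    (A : ℕ → Ω → EuclideanSpace ℝ (Fin d))
    (hmeas : ∀ n, Measurable (A n))
    (hindep : iIndepFun A μ)
    (a : EuclideanSpace ℝ (Fin d)) (ha : a ≠ 0)
    (hmean : ∀ n, ∫ ω, A n ω ∂μ = a)
    (L R : ℝ)
    (hL : ∀ n, ∀ᵐ ω ∂μ, ‖A n ω‖ ≤ L)
    (hR : ∀ n, ∀ᵐ ω ∂μ, ‖A n ω - a‖ ≤ R)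
    (η : ℝ) (hη : 0 < η)
    (x : ℕ → Ω → EuclideanSpace ℝ (Fin d))
    (hx1 : ∀ ω, IsProjOn (Metric.closedBall (0 : EuclideanSpace ℝ (Fin d)) 1)
      (0 : EuclideanSpace ℝ (Fin d)) (x 1 ω))
    (hxn : ∀ n, 2 ≤ n → ∀ ω,
      IsProjOn (Metric.closedBall (0 : EuclideanSpace ℝ (Fin d)) 1)
        ((0 : EuclideanSpace ℝ (Fin d)) -
          (η / Real.sqrt ((n - 1 : ℕ) : ℝ)) • ∑ i ∈ Icc 1 (n - 1), A i ω)
        (x n ω)) :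
    ∑ i ∈ Icc 1 ⌈4 / (η ^ 2 * ‖a‖ ^ 2) + 8 * R ^ 2 / ‖a‖ ^ 2⌉₊,
        ∫ ω, ⟪a, x i ω - (-(‖a‖⁻¹ • a))⟫ ∂μ ≤
      2 * L + (1 / (2 * η) + 2 * η * L ^ 2 + Real.sqrt (2 * Real.pi) * R) *
        (1 + 2 / (η * ‖a‖) + 2 * Real.sqrt 2 * R / ‖a‖) := by
  set M := ⌈4 / (η ^ 2 * ‖a‖ ^ 2) + 8 * R ^ 2 / ‖a‖ ^ 2⌉₊
  set xs := -(‖a‖⁻¹ • a)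
  have ha' : 0 < ‖a‖ := norm_pos_iff.2 ha
  have hxs : ‖xs‖ = 1 := by simp [xs, norm_smul, ha'.ne']
  have hL0 : 0 ≤ L := (norm_nonneg _).trans (hL 0).exists.choose_spec
  have hR0 : 0 ≤ R := (norm_nonneg _).trans (hR 0).exists.choose_spec
  have hx : ∀ i ∈ Icc 1 M, ∀ ω, x i ω = lazyBallIterate 0 η (A · ω) i := by
    rintro i hi ω
    rcases (mem_Icc.1 hi).1.eq_or_lt with rfl | hi
    · rw [(hx1 ω).eq_projBall]; simp [lazyBallIterate]
    · rw [(hxn i hi ω).eq_projBall]; rfl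
  have hsqrtM : √M ≤ 1 + 2 / (η * ‖a‖) + 2 * √2 * R / ‖a‖ := by
    have := sqrt_natCeil_add_sq_le (α := 2 / (η * ‖a‖)) (β := 2 * √2 * R / ‖a‖)
      (by positivity) (by positivity)
    convert this using 4
    field_simp
    rw [Real.sq_sqrt zero_le_two]
    ring
  calc ∑ i ∈ Icc 1 M, ∫ ω, ⟪a, x i ω - xs⟫ ∂μ
      = ∑ i ∈ Icc 1 M, ∫ ω, ⟪a, lazyBallIterate 0 η (A · ω) i - xs⟫ ∂μ :=
        sum_congr rfl fun i hi => by simp only [hx i hi]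
    _ ≤ (1 / (2 * η) + 2 * η * L ^ 2) * √M :=
        sum_integral_inner_lazyBallIterate_le hmeas hindep hmean hL hη hxs.le M
    _ ≤ (1 / (2 * η) + 2 * η * L ^ 2 + √(2 * Real.pi) * R) *
          (1 + 2 / (η * ‖a‖) + 2 * √2 * R / ‖a‖) :=
        mul_le_mul (le_add_of_nonneg_right (by positivity)) hsqrtM (Real.sqrt_nonneg _)
          (by positivity)
    _ ≤ _ := le_add_of_nonneg_left (by positivity)

/-- Lemma 6: the pseudo-regret of Subgradient on the unit ball over the initial segment
of turns `1, …, M` for `M = ⌈4/(η²‖a‖²) + 8R²/‖a‖²⌉`. -/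
theorem ball_initial_segment {d : ℕ}
    {Ω : Type*} [MeasurableSpace Ω] (μ : Measure Ω) [IsProbabilityMeasure μ]
    (A : ℕ → Ω → EuclideanSpace ℝ (Fin d))
    (hmeas : ∀ n, Measurable (A n))
    (hindep : iIndepFun A μ)
    (hident : ∀ n, IdentDistrib (A n) (A 1) μ μ)
    (a : EuclideanSpace ℝ (Fin d)) (ha : a ≠ 0)
    (hmean : ∀ n, ∫ ω, A n ω ∂μ = a)
    (L R : ℝ)
    (hL : ∀ n, ∀ᵐ ω ∂μ, ‖A n ω‖ ≤ L)
    (hR : ∀ n, ∀ᵐ ω ∂μ, ‖A n ω - a‖ ≤ R)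
    (η : ℝ) (hη : 0 < η)
    (x : ℕ → Ω → EuclideanSpace ℝ (Fin d))
    (hx1 : ∀ ω, IsProjOn (Metric.closedBall (0 : EuclideanSpace ℝ (Fin d)) 1)
      (0 : EuclideanSpace ℝ (Fin d)) (x 1 ω))
    (hxn : ∀ n, 2 ≤ n → ∀ ω,
      IsProjOn (Metric.closedBall (0 : EuclideanSpace ℝ (Fin d)) 1)
        ((0 : EuclideanSpace ℝ (Fin d)) -
          (η / Real.sqrt ((n - 1 : ℕ) : ℝ)) • ∑ i ∈ Icc 1 (n - 1), A i ω)
        (x n ω)) :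
    ∑ i ∈ Icc 1 ⌈4 / (η ^ 2 * ‖a‖ ^ 2) + 8 * R ^ 2 / ‖a‖ ^ 2⌉₊,
        ∫ ω, ⟪a, x i ω - (-(‖a‖⁻¹ • a))⟫ ∂μ ≤
      2 * L + (1 / (2 * η) + 2 * η * L ^ 2 + Real.sqrt (2 * Real.pi) * R) *
        (1 + 2 / (η * ‖a‖) + 2 * Real.sqrt 2 * R / ‖a‖) :=
  ball_initial_segment_general μ A hmeas hindep a ha hmean L R hL hR η hη x hx1 hxn
end

section
/- Let P ⊆ ℝ^d be a polytope with diameter D > 0 and width W > 0. Suppose the cost vectors b_1, …, b_N ∈ ℝ^d satisfy |b_n·(x−y)| ≤ L_∞ for all x, y ∈ P and all n, with L_∞ > 0. Let x_1, …, x_N be the actions of the lazy anytime Subgradient algorithm on P with base point y_1 ∈ P and parameter η = D·W/(2·L_∞), and let x* minimise x ↦ Σ_{i=1}^N b_i·x over P. Then the regret satisfies Σ_{i=1}^N b_i·(x_i − x*) ≤ 3·L_∞·D·√N / W. -/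
/-!
The lazy anytime iterate `x (n + 1)` is the minimiser over `P` of the regularized loss
`⟪b 1 + ⋯ + b n, z⟫ + λₙ / 2 * ‖z - y1‖ ^ 2` with `λₙ = √n / η`. The
follow-the-regularized-leader analysis therefore bounds the regret against any `z ∈ P` by
`λ_N / 2 * ‖z - y1‖ ^ 2 + ∑ G ^ 2 / (2 λₙ₋₁)`, where `G` bounds `⟪b n, u - v⟫ / ‖u - v‖` on `P`.
Since `P - P ⊆ U`, only the projection of `b n` onto `U` matters, and the definition of the width
bounds its norm by `L∞ / W`. With `G = L∞ / W` the choice of `η` balances the two terms to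
`2 L∞ D √N / W`.
-/

open Finset
open scoped RealInnerProductSpace

/-- `max n 1` keeps the weight positive at `n = 0`, where it only scales an empty sum. -/
noncomputable def anytimeWeight (η : ℝ) (n : ℕ) : ℝ :=
  √(max (n : ℝ) 1) / η

theorem anytimeWeight_pos {η : ℝ} (hη : 0 < η) (n : ℕ) : 0 < anytimeWeight η n :=
  div_pos (Real.sqrt_pos.mpr (lt_max_of_lt_right one_pos)) hη

theorem anytimeWeight_mono {η : ℝ} (hη : 0 ≤ η) : Monotone (anytimeWeight η) := fun m n hmn => by
  unfold anytimeWeight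
  gcongr

theorem anytimeWeight_of_one_le (η : ℝ) {n : ℕ} (hn : 1 ≤ n) : anytimeWeight η n = √n / η := by
  rw [anytimeWeight, max_eq_left (by exact_mod_cast hn)]

theorem sqrt_le_two_mul_sqrt_max_pred (n : ℕ) : √n ≤ 2 * √(max ((n - 1 : ℕ) : ℝ) 1) := by
  have hn : (n : ℝ) ≤ 2 ^ 2 * max ((n - 1 : ℕ) : ℝ) 1 := by
    rcases n with _ | n
    · simp
    · rw [Nat.add_sub_cancel]
      push_cast
      nlinarith [le_max_left (n : ℝ) 1, le_max_right (n : ℝ) 1]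
  calc √n ≤ √(2 ^ 2 * max ((n - 1 : ℕ) : ℝ) 1) := Real.sqrt_le_sqrt hn
    _ = 2 * √(max ((n - 1 : ℕ) : ℝ) 1) := by
      rw [Real.sqrt_mul (by positivity), Real.sqrt_sq two_pos.le]

theorem sum_inv_sqrt_le (N : ℕ) : ∑ n ∈ Icc 1 N, (√n)⁻¹ ≤ 2 * √N := by
  induction N with
  | zero => simp
  | succ N ih =>
    rw [sum_Icc_succ_top (by omega)]
    have hpos : 0 < √((N : ℝ) + 1) := Real.sqrt_pos.mpr (by positivity)
    -- `1 / √(N + 1) ≤ 2 / (√N + √(N + 1)) = 2 (√(N + 1) - √N)`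
    have hstep : (√((N : ℝ) + 1))⁻¹ ≤ 2 * √((N : ℝ) + 1) - 2 * √N := by
      rw [inv_le_iff_one_le_mul₀ hpos]
      nlinarith [Real.sq_sqrt (N.cast_nonneg : (0 : ℝ) ≤ N),
        Real.sq_sqrt (by positivity : (0 : ℝ) ≤ N + 1),
        sq_nonneg (√((N : ℝ) + 1) - √N), Real.sqrt_nonneg N]
    push_cast
    linarith

theorem sum_div_anytimeWeight_pred_le {η a : ℝ} (hη : 0 < η) (ha : 0 ≤ a) (N : ℕ) :
    ∑ n ∈ Icc 1 N, a / (2 * anytimeWeight η (n - 1)) ≤ 2 * a * η * √N := by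
  have hterm : ∀ n ∈ Icc 1 N, a / (2 * anytimeWeight η (n - 1)) ≤ a * η * (√n)⁻¹ := by
    intro n hn
    have hsqrt : 0 < √(n : ℝ) := Real.sqrt_pos.mpr (by exact_mod_cast (mem_Icc.mp hn).1)
    rw [anytimeWeight, ← div_eq_mul_inv, div_le_div_iff₀ (by positivity) hsqrt]
    calc a * √n ≤ a * (2 * √(max ((n - 1 : ℕ) : ℝ) 1)) :=
          mul_le_mul_of_nonneg_left (sqrt_le_two_mul_sqrt_max_pred n) ha
      _ = a * η * (2 * (√(max ((n - 1 : ℕ) : ℝ) 1) / η)) := by field_simp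
  calc ∑ n ∈ Icc 1 N, a / (2 * anytimeWeight η (n - 1))
      ≤ a * η * ∑ n ∈ Icc 1 N, (√n)⁻¹ := by rw [mul_sum]; exact sum_le_sum hterm
    _ ≤ a * η * (2 * √N) := by gcongr; exact sum_inv_sqrt_le N
    _ = 2 * a * η * √N := by ring

section InnerProductSpace

variable {E : Type*} [NormedAddCommGroup E] [InnerProductSpace ℝ E]

theorem inner_sub_le_zero_of_forall_norm_sub_le {K : Set E} (hK : Convex ℝ K) {p q z : E}
    (hq : q ∈ K) (hmin : ∀ w ∈ K, ‖p - q‖ ≤ ‖p - w‖) (hz : z ∈ K) : ⟪p - q, z - q⟫ ≤ 0 := by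
  have : Nonempty K := ⟨⟨q, hq⟩⟩
  refine (norm_eq_iInf_iff_real_inner_le_zero hK hq).mp (le_antisymm ?_ ?_) z hz
  · exact le_ciInf fun w => hmin w w.2
  · exact ciInf_le ⟨0, Set.forall_mem_range.mpr fun w => norm_nonneg _⟩ (⟨q, hq⟩ : K)

/-- The lazy projection of `y - c⁻¹ • s` onto a convex set minimises this over the set. -/
noncomputable def regularizedLoss (s : E) (c : ℝ) (y z : E) : ℝ :=
  ⟪s, z⟫ + c / 2 * ‖z - y‖ ^ 2

theorem regularizedLoss_add_le {s y q z : E} {c : ℝ} (hc : 0 < c)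
    (hvi : ⟪(y - c⁻¹ • s) - q, z - q⟫ ≤ 0) :
    regularizedLoss s c y q + c / 2 * ‖z - q‖ ^ 2 ≤ regularizedLoss s c y z := by
  have hexpand : ‖z - y‖ ^ 2 = ‖z - q‖ ^ 2 + 2 * ⟪z - q, q - y⟫ + ‖q - y‖ ^ 2 := by
    rw [← norm_add_sq_real, sub_add_sub_cancel]
  have hcross : ⟪z - q, q - y⟫ = -⟪y - q, z - q⟫ := by
    rw [real_inner_comm, ← neg_sub, inner_neg_left]
  have hvi' : c * ⟪y - q, z - q⟫ ≤ ⟪s, z⟫ - ⟪s, q⟫ := by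
    rw [sub_right_comm, inner_sub_left, real_inner_smul_left] at hvi
    have := mul_le_mul_of_nonneg_left hvi hc.le
    rw [mul_sub, ← mul_assoc, mul_inv_cancel₀ hc.ne', one_mul, mul_zero,
      inner_sub_right s z q] at this
    linarith
  unfold regularizedLoss
  rw [hexpand, hcross]
  linarith

theorem regularizedLoss_add_inner_le (s b : E) {c c' : ℝ} (hcc' : c ≤ c') (y z : E) :
    regularizedLoss s c y z + ⟪b, z⟫ ≤ regularizedLoss (s + b) c' y z := by
  unfold regularizedLoss
  rw [inner_add_left]
  nlinarith [sq_nonneg ‖z - y‖]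

section FollowTheRegularizedLeader

variable {K : Set E} {y : E} {b x : ℕ → E} {c : ℕ → ℝ} {G : ℝ}

theorem sum_inner_le_regularizedLoss_add (hc : ∀ n, 0 < c n) (hmono : Monotone c)
    (hxK : ∀ n, x (n + 1) ∈ K)
    (hopt : ∀ n, ∀ z ∈ K, regularizedLoss (∑ i ∈ Icc 1 n, b i) (c n) y (x (n + 1))
      + c n / 2 * ‖z - x (n + 1)‖ ^ 2 ≤ regularizedLoss (∑ i ∈ Icc 1 n, b i) (c n) y z)
    {N : ℕ} (hlip : ∀ n ∈ Icc 1 N, ⟪b n, x n - x (n + 1)⟫ ≤ G * ‖x n - x (n + 1)‖) :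
    ∑ n ∈ Icc 1 N, ⟪b n, x n⟫ ≤ regularizedLoss (∑ i ∈ Icc 1 N, b i) (c N) y (x (N + 1))
      + ∑ n ∈ Icc 1 N, G ^ 2 / (2 * c (n - 1)) := by
  induction N with
  | zero => simpa [regularizedLoss] using mul_nonneg (half_pos (hc 0)).le (sq_nonneg ‖x 1 - y‖)
  | succ m ih =>
    have ih := ih fun n hn => hlip n (Icc_subset_Icc_right m.le_succ hn)
    have hstep := hlip (m + 1) (by simp)
    have hleader := hopt m (x (m + 2)) (hxK (m + 1))
    have hgrow := regularizedLoss_add_inner_le (∑ i ∈ Icc 1 m, b i) (b (m + 1))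
      (hmono m.le_succ) y (x (m + 2))
    -- AM-GM: `G a - c a² / 2 ≤ G² / (2c)`
    have hamgm : G * ‖x (m + 1) - x (m + 2)‖ - c m / 2 * ‖x (m + 1) - x (m + 2)‖ ^ 2
        ≤ G ^ 2 / (2 * c m) := by
      rw [le_div_iff₀ (by linarith [hc m])]
      nlinarith [sq_nonneg (G - c m * ‖x (m + 1) - x (m + 2)‖), hc m]
    rw [sum_Icc_succ_top (by omega), sum_Icc_succ_top (by omega), sum_Icc_succ_top (by omega),
      Nat.add_sub_cancel]
    rw [norm_sub_rev] at hleader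
    rw [inner_sub_right] at hstep
    linarith

theorem sum_inner_sub_le (hc : ∀ n, 0 < c n) (hmono : Monotone c) (hxK : ∀ n, x (n + 1) ∈ K)
    (hopt : ∀ n, ∀ z ∈ K, regularizedLoss (∑ i ∈ Icc 1 n, b i) (c n) y (x (n + 1))
      + c n / 2 * ‖z - x (n + 1)‖ ^ 2 ≤ regularizedLoss (∑ i ∈ Icc 1 n, b i) (c n) y z)
    {N : ℕ} (hlip : ∀ n ∈ Icc 1 N, ⟪b n, x n - x (n + 1)⟫ ≤ G * ‖x n - x (n + 1)‖)
    {z : E} (hz : z ∈ K) :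
    ∑ n ∈ Icc 1 N, ⟪b n, x n - z⟫
      ≤ c N / 2 * ‖z - y‖ ^ 2 + ∑ n ∈ Icc 1 N, G ^ 2 / (2 * c (n - 1)) := by
  have hleader := sum_inner_le_regularizedLoss_add hc hmono hxK hopt hlip
  have hcompare := hopt N z hz
  simp only [regularizedLoss, sum_inner] at hleader hcompare
  simp only [inner_sub_right, sum_sub_distrib]
  linarith [mul_nonneg (hc N).le (sq_nonneg ‖z - x (N + 1)‖)]

end FollowTheRegularizedLeader

section Width

variable {P : Set E} {U : Submodule ℝ E}

theorem sub_mem_of_affineSpan_eq {t : E}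
    (hU : (affineSpan ℝ P : Set E) = (fun u => u + t) '' (U : Set E)) {u v : E}
    (hu : u ∈ P) (hv : v ∈ P) : u - v ∈ U := by
  obtain ⟨u', hu', rfl⟩ := hU ▸ subset_affineSpan ℝ P hu
  obtain ⟨v', hv', rfl⟩ := hU ▸ subset_affineSpan ℝ P hv
  simpa using U.sub_mem hu' hv'

theorem exists_le_inner_sub_of_mem_lowerBounds_width (hP : IsCompact P) (hne : P.Nonempty)
    {W : ℝ} (hW : W ∈ lowerBounds {w : ℝ | ∃ ℓ : E, ℓ ∈ U ∧ ‖ℓ‖ = 1 ∧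
      IsGreatest {r : ℝ | ∃ u ∈ P, ∃ v ∈ P, r = ⟪ℓ, u - v⟫} w})
    {ℓ : E} (hℓU : ℓ ∈ U) (hℓ : ‖ℓ‖ = 1) : ∃ u ∈ P, ∃ v ∈ P, W ≤ ⟪ℓ, u - v⟫ := by
  have hcont : Continuous fun w : E => ⟪ℓ, w⟫ := by fun_prop
  obtain ⟨u, hu, humax⟩ := hP.exists_isMaxOn hne hcont.continuousOn
  obtain ⟨v, hv, hvmin⟩ := hP.exists_isMinOn hne hcont.continuousOn
  refine ⟨u, hu, v, hv, hW ⟨ℓ, hℓU, hℓ, ⟨u, hu, v, hv, rfl⟩, ?_⟩⟩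
  rintro _ ⟨u', hu', v', hv', rfl⟩
  rw [inner_sub_right, inner_sub_right]
  linarith [isMaxOn_iff.mp humax u' hu', isMinOn_iff.mp hvmin v' hv']

theorem inner_le_div_mul_norm_of_width [U.HasOrthogonalProjection] {W L : ℝ} (hW0 : 0 < W)
    (hL : 0 ≤ L) (hsub : ∀ u ∈ P, ∀ v ∈ P, u - v ∈ U)
    (hwidth : ∀ ℓ ∈ U, ‖ℓ‖ = 1 → ∃ u ∈ P, ∃ v ∈ P, W ≤ ⟪ℓ, u - v⟫)
    {b : E} (hb : ∀ u ∈ P, ∀ v ∈ P, ⟪b, u - v⟫ ≤ L) {w : E} (hw : w ∈ U) :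
    ⟪b, w⟫ ≤ L / W * ‖w‖ := by
  set p := U.starProjection b
  have hp : ∀ w ∈ U, ⟪b, w⟫ = ⟪p, w⟫ := fun w hw => by
    rw [U.inner_starProjection_left_eq_right, Submodule.starProjection_eq_self_iff.mpr hw]
  have hnorm : ‖p‖ ≤ L / W := by
    rcases eq_or_ne p 0 with hp0 | hp0
    · rw [hp0, norm_zero]
      positivity
    obtain ⟨u, hu, v, hv, hle⟩ := hwidth (‖p‖⁻¹ • p) (U.smul_mem _ (U.starProjection_apply_mem b))
      (norm_smul_inv_norm hp0)
    rw [real_inner_smul_left, ← hp _ (hsub u hu v hv), le_inv_mul_iff₀ (norm_pos_iff.mpr hp0)]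
      at hle
    rw [le_div_iff₀ hW0]
    exact hle.trans (hb u hu v hv)
  calc ⟪b, w⟫ = ⟪p, w⟫ := hp w hw
    _ ≤ ‖p‖ * ‖w‖ := real_inner_le_norm _ _
    _ ≤ L / W * ‖w‖ := by gcongr

end Width


theorem sum_inner_sub_le_of_anytimeWeight {K : Set E} {y : E} {b x : ℕ → E} {η G : ℝ}
    (hη : 0 < η) (hxK : ∀ n, x (n + 1) ∈ K)
    (hopt : ∀ n, ∀ z ∈ K,
      regularizedLoss (∑ i ∈ Icc 1 n, b i) (anytimeWeight η n) y (x (n + 1))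
        + anytimeWeight η n / 2 * ‖z - x (n + 1)‖ ^ 2
        ≤ regularizedLoss (∑ i ∈ Icc 1 n, b i) (anytimeWeight η n) y z)
    {N : ℕ} (hN : 1 ≤ N)
    (hlip : ∀ n ∈ Icc 1 N, ⟪b n, x n - x (n + 1)⟫ ≤ G * ‖x n - x (n + 1)‖)
    {z : E} (hz : z ∈ K) :
    ∑ n ∈ Icc 1 N, ⟪b n, x n - z⟫ ≤ √N / (2 * η) * ‖z - y‖ ^ 2 + 2 * G ^ 2 * η * √N := by
  have hregret := sum_inner_sub_le (anytimeWeight_pos hη) (anytimeWeight_mono hη.le) hxK hopt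
    hlip hz
  rw [anytimeWeight_of_one_le η hN, div_div, mul_comm η] at hregret
  linarith [sum_div_anytimeWeight_pred_le hη (sq_nonneg G) N]

end InnerProductSpace

theorem IsProjOn.regularizedLoss_add_le {d : ℕ} {X : Set (EuclideanSpace ℝ (Fin d))}
    (hX : Convex ℝ X) {s y q z : EuclideanSpace ℝ (Fin d)} {c : ℝ} (hc : 0 < c)
    (h : IsProjOn X (y - c⁻¹ • s) q) (hz : z ∈ X) :
    regularizedLoss s c y q + c / 2 * ‖z - q‖ ^ 2 ≤ regularizedLoss s c y z :=
  _root_.regularizedLoss_add_le hc (inner_sub_le_zero_of_forall_norm_sub_le hX h.1 h.2 hz)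

theorem isProjOn_anytimeWeight {d : ℕ} {P : Set (EuclideanSpace ℝ (Fin d))}
    {y1 : EuclideanSpace ℝ (Fin d)} {η : ℝ} {b x : ℕ → EuclideanSpace ℝ (Fin d)}
    (hx1 : IsProjOn P y1 (x 1))
    (hxn : ∀ n, 2 ≤ n →
      IsProjOn P (y1 - (η / √((n - 1 : ℕ) : ℝ)) • ∑ i ∈ Icc 1 (n - 1), b i) (x n))
    (n : ℕ) : IsProjOn P (y1 - (anytimeWeight η n)⁻¹ • ∑ i ∈ Icc 1 n, b i) (x (n + 1)) := by
  rcases n with _ | n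
  · simpa using hx1
  · rw [anytimeWeight_of_one_le η (by omega), inv_div]
    simpa using hxn (n + 2) (by omega)

theorem subgradient_worst_case_regret_intrinsic_general {d : ℕ}
    (V : Finset (EuclideanSpace ℝ (Fin d)))
    (P : Set (EuclideanSpace ℝ (Fin d)))
    (hP : P = convexHull ℝ (V : Set (EuclideanSpace ℝ (Fin d))))
    (D : ℝ) (hD0 : 0 < D)
    (hD : IsGreatest {r : ℝ | ∃ x ∈ P, ∃ y ∈ P, r = ‖x - y‖} D)
    (U : Submodule ℝ (EuclideanSpace ℝ (Fin d))) (t : EuclideanSpace ℝ (Fin d))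
    (hU : (affineSpan ℝ P : Set (EuclideanSpace ℝ (Fin d))) =
      (fun u => u + t) '' (U : Set (EuclideanSpace ℝ (Fin d))))
    (W : ℝ) (hW0 : 0 < W)
    (hW : IsLeast {w : ℝ | ∃ ℓ : EuclideanSpace ℝ (Fin d), ℓ ∈ U ∧ ‖ℓ‖ = 1 ∧
      IsGreatest {r : ℝ | ∃ x ∈ P, ∃ y ∈ P, r = ⟪ℓ, x - y⟫} w} W)
    (N : ℕ) (hN : 1 ≤ N)
    (b : ℕ → EuclideanSpace ℝ (Fin d))
    (Linf : ℝ) (hLinf0 : 0 < Linf)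
    (hb : ∀ n, 1 ≤ n → n ≤ N → ∀ x ∈ P, ∀ y ∈ P, |⟪b n, x - y⟫| ≤ Linf)
    (y1 : EuclideanSpace ℝ (Fin d)) (hy1 : y1 ∈ P)
    (η : ℝ) (hη : η = D * W / (2 * Linf))
    (x : ℕ → EuclideanSpace ℝ (Fin d))
    (hx1 : IsProjOn P y1 (x 1))
    (hxn : ∀ n, 2 ≤ n →
      IsProjOn P
        (y1 - (η / Real.sqrt ((n - 1 : ℕ) : ℝ)) • ∑ i ∈ Icc 1 (n - 1), b i) (x n))
    (xstar : EuclideanSpace ℝ (Fin d)) (hxstar : xstar ∈ P) :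
    ∑ i ∈ Icc 1 N, ⟪b i, x i - xstar⟫ ≤ 3 * Linf * D * Real.sqrt N / W := by
  have hη0 : 0 < η := by rw [hη]; positivity
  have hPconv : Convex ℝ P := hP ▸ convex_convexHull ℝ _
  have hPcomp : IsCompact P := hP ▸ V.finite_toSet.isCompact_convexHull ℝ
  have hproj := isProjOn_anytimeWeight hx1 hxn
  have hsub : ∀ u ∈ P, ∀ v ∈ P, u - v ∈ U := fun u hu v hv => sub_mem_of_affineSpan_eq hU hu hv
  have hwidth : ∀ ℓ ∈ U, ‖ℓ‖ = 1 → ∃ u ∈ P, ∃ v ∈ P, W ≤ ⟪ℓ, u - v⟫ := fun ℓ hℓU hℓ =>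
    exists_le_inner_sub_of_mem_lowerBounds_width hPcomp ⟨y1, hy1⟩ hW.2 hℓU hℓ
  have hlip : ∀ n ∈ Icc 1 N, ⟪b n, x n - x (n + 1)⟫ ≤ Linf / W * ‖x n - x (n + 1)‖ := by
    intro n hn
    obtain ⟨hn1, hnN⟩ := mem_Icc.mp hn
    obtain ⟨m, rfl⟩ := Nat.exists_eq_add_of_le' hn1
    exact inner_le_div_mul_norm_of_width hW0 hLinf0.le hsub hwidth
      (fun u hu v hv => (le_abs_self _).trans (hb _ hn1 hnN u hu v hv))
      (hsub _ (hproj m).1 _ (hproj _).1)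
  have hregret := sum_inner_sub_le_of_anytimeWeight hη0 (fun n => (hproj n).1)
    (fun n z hz => (hproj n).regularizedLoss_add_le hPconv (anytimeWeight_pos hη0 n) hz) hN
    hlip hxstar
  have hdist : ‖xstar - y1‖ ≤ D := hD.2 ⟨xstar, hxstar, y1, hy1, rfl⟩
  calc ∑ i ∈ Icc 1 N, ⟪b i, x i - xstar⟫
      ≤ √N / (2 * η) * ‖xstar - y1‖ ^ 2 + 2 * (Linf / W) ^ 2 * η * √N := hregret
    _ ≤ √N / (2 * η) * D ^ 2 + 2 * (Linf / W) ^ 2 * η * √N := by gcongr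
    _ = 2 * Linf * D * √N / W := by rw [hη]; field_simp; ring
    _ ≤ 3 * Linf * D * √N / W := by gcongr; norm_num

/-- Theorem 6: worst-case regret of the lazy anytime Subgradient algorithm on a polytope
under intrinsic bounds on the cost vectors. -/
theorem subgradient_worst_case_regret_intrinsic {d : ℕ}
    (V : Finset (EuclideanSpace ℝ (Fin d)))
    (P : Set (EuclideanSpace ℝ (Fin d)))
    (hP : P = convexHull ℝ (V : Set (EuclideanSpace ℝ (Fin d))))
    (D : ℝ) (hD0 : 0 < D)
    (hD : IsGreatest {r : ℝ | ∃ x ∈ P, ∃ y ∈ P, r = ‖x - y‖} D)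
    (U : Submodule ℝ (EuclideanSpace ℝ (Fin d))) (t : EuclideanSpace ℝ (Fin d))
    (hU : (affineSpan ℝ P : Set (EuclideanSpace ℝ (Fin d))) =
      (fun u => u + t) '' (U : Set (EuclideanSpace ℝ (Fin d))))
    (W : ℝ) (hW0 : 0 < W)
    (hW : IsLeast {w : ℝ | ∃ ℓ : EuclideanSpace ℝ (Fin d), ℓ ∈ U ∧ ‖ℓ‖ = 1 ∧
      IsGreatest {r : ℝ | ∃ x ∈ P, ∃ y ∈ P, r = ⟪ℓ, x - y⟫} w} W)
    (N : ℕ) (hN : 1 ≤ N)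
    (b : ℕ → EuclideanSpace ℝ (Fin d))
    (Linf : ℝ) (hLinf0 : 0 < Linf)
    (hb : ∀ n, 1 ≤ n → n ≤ N → ∀ x ∈ P, ∀ y ∈ P, |⟪b n, x - y⟫| ≤ Linf)
    (y1 : EuclideanSpace ℝ (Fin d)) (hy1 : y1 ∈ P)
    (η : ℝ) (hη : η = D * W / (2 * Linf))
    (x : ℕ → EuclideanSpace ℝ (Fin d))
    (hx1 : IsProjOn P y1 (x 1))
    (hxn : ∀ n, 2 ≤ n →
      IsProjOn P
        (y1 - (η / Real.sqrt ((n - 1 : ℕ) : ℝ)) • ∑ i ∈ Icc 1 (n - 1), b i) (x n))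
    (xstar : EuclideanSpace ℝ (Fin d)) (hxstar : xstar ∈ P)
    (hxstarmin : ∀ z ∈ P,
      ∑ i ∈ Icc 1 N, ⟪b i, xstar⟫ ≤ ∑ i ∈ Icc 1 N, ⟪b i, z⟫) :
    ∑ i ∈ Icc 1 N, ⟪b i, x i - xstar⟫ ≤ 3 * Linf * D * Real.sqrt N / W :=
  subgradient_worst_case_regret_intrinsic_general V P hP D hD0 hD U t hU W hW0 hW N hN b Linf hLinf0
    hb y1 hy1 η hη x hx1 hxn xstar hxstar
end
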